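/- If p is a prime element and a non-zerodivisor of a commutative ring R, then every power pᵏ (k ≥ 1) of p is primoid. -/
import Mathlib


/-- An element `q` of a commutative ring is *primoid* if whenever `q ^ 2` divides a
product, `q` divides one of the factors. -/
def Primoid {R : Type*} [CommRing R] (q : R) : Prop :=
  ∀ a b : R, q ^ 2 ∣ a * b → q ∣ a ∨ q ∣ b

private lemma aux_pow_split {R : Type*} [CommRing R] (p : R) (hp : Prime p)
    (hnzd : p ∈ nonZeroDivisors R) :
    ∀ N m n a b, m + n ≤ N → p ^ (m + n) ∣ a * b → p ^ m ∣ a ∨ p ^ n ∣ b := by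
  intro N
  induction N with
  | zero =>
    intro m n a b hle _
    left
    have : m = 0 := by omega
    simp [this]
  | succ N ih =>
    intro m n a b hle hdvd
    rcases Nat.eq_zero_or_pos (m + n) with h0 | hpos
    · left
      have : m = 0 := by omega
      simp [this]
    · have hpdvd : p ∣ a * b := dvd_trans (dvd_pow_self p (by omega)) hdvd
      rcases hp.2.2 a b hpdvd with ha | hb
      · rcases Nat.eq_zero_or_pos m with hm | hm
        · left; simp [hm]
        · obtain ⟨a', rfl⟩ := ha
          have hkey : p ^ (m - 1 + n) ∣ a' * b := by
            obtain ⟨c, hc⟩ := hdvd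
            have : p * (p ^ (m - 1 + n) * c) = p * (a' * b) := by
              rw [← mul_assoc, ← pow_succ']
              have : m - 1 + n + 1 = m + n := by omega
              rw [this]
              rw [mul_assoc] at hc
              exact hc.symm
            exact ⟨c, ((mul_cancel_left_mem_nonZeroDivisors hnzd).mp this).symm⟩
          rcases ih (m - 1) n a' b (by omega) hkey with h | h
          · left
            obtain ⟨c, hc⟩ := h
            exact ⟨c, by rw [hc, ← mul_assoc, ← pow_succ', Nat.sub_add_cancel hm]⟩
          · right; exact h
      · rcases Nat.eq_zero_or_pos n with hn | hn
        · right; simp [hn]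
        · obtain ⟨b', rfl⟩ := hb
          have hkey : p ^ (m + (n - 1)) ∣ a * b' := by
            obtain ⟨c, hc⟩ := hdvd
            have : p * (p ^ (m + (n - 1)) * c) = p * (a * b') := by
              rw [← mul_assoc, ← pow_succ']
              have : m + (n - 1) + 1 = m + n := by omega
              rw [this]
              rw [show a * (p * b') = p * (a * b') by ring] at hc
              exact hc.symm
            exact ⟨c, ((mul_cancel_left_mem_nonZeroDivisors hnzd).mp this).symm⟩
          rcases ih m (n - 1) a b' (by omega) hkey with h | h
          · left; exact h
          · right
            obtain ⟨c, hc⟩ := h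
            exact ⟨c, by rw [hc, ← mul_assoc, ← pow_succ', Nat.sub_add_cancel hn]⟩

/-- Every power `p ^ k` (`k ≥ 1`) of a prime non-zerodivisor is primoid. -/
theorem stmt2 {R : Type*} [CommRing R] (p : R) (hp : Prime p)
    (hnzd : p ∈ nonZeroDivisors R) (k : ℕ) (hk : 1 ≤ k) :
    Primoid (p ^ k) := by
  intro a b hdvd
  have : p ^ (k + k) ∣ a * b := by
    rwa [← pow_mul, show k * 2 = k + k from by omega] at hdvd
  exact aux_pow_split p hp hnzd (k + k) k k a b le_rfl this
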